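/- arXiv:math/0506137 — 2 statements merged into one kernel-verified Lean document; each statement's English description precedes it below -/
import Mathlib

section
/- Let A be a DTSM deterministic M-automaton over X accepting the subgroup Q ⊆ F, and let p and q be terminal states of A. Then there exists a word w ∈ X* with w̄ ∈ Q such that there is a path in A from p to q labelled (1, w). -/
/-- A monoid `M` has *unique left inverses* if whenever `b * a = 1 = c * a` we have `b = c`. -/
def UniqueLeftInverses (M : Type) [Monoid M] : Prop :=
  ∀ a b c : M, b * a = 1 → c * a = 1 → b = c

/-- The word problem of a group `H`, generated as a monoid by the image of `φ : X → H`,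
is the set of words over `X` representing the identity of `H`. -/
def wordProblem {H : Type} [Group H] {X : Type} (φ : X → H) : Set (List X) :=
  {w | (w.map φ).prod = 1}

/-- A deterministic `M`-automaton over the alphabet `X`: a finite directed graph with
a distinguished initial state, a set of terminal states, and edges labelled by pairs in
`M × X`, such that each state has at most one outgoing edge per letter of `X`. -/
structure DetMAutomaton (M : Type) [Monoid M] (X : Type) where
  State : Type
  [stateFintype : Fintype State]
  init : State
  terminal : Set State
  edge : State → M × X → State → Prop
  det : ∀ ⦃p : State⦄ ⦃x : X⦄ ⦃g h : M⦄ ⦃q r : State⦄,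
      edge p (g, x) q → edge p (h, x) r → g = h ∧ q = r

namespace DetMAutomaton

variable {M : Type} [Monoid M] {X : Type}

/-- `A.Path p m w q` means there is a path from `p` to `q` labelled `(m, w)`: the
`X`-components of its edge labels spell out `w` in order, and the `M`-components
multiply in order to `m`. -/
inductive Path (A : DetMAutomaton M X) : A.State → M → List X → A.State → Prop
  | nil (p : A.State) : Path A p 1 [] p
  | cons {p q r : A.State} {g h : M} {x : X} {w : List X} :
      A.edge p (g, x) q → Path A q h w r → Path A p (g * h) (x :: w) r

/-- The language accepted by a deterministic `M`-automaton: all words `w` such that some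
path labelled `(1, w)` leads from the initial state to a terminal state. -/
def Lang (A : DetMAutomaton M X) : Set (List X) :=
  {w | ∃ q ∈ A.terminal, A.Path A.init 1 w q}

/-- A deterministic `M`-automaton is *deterministic terminal state minimal* (DTSM) if no
deterministic `M`-automaton accepting the same language has strictly fewer terminal states. -/
def DTSM (A : DetMAutomaton M X) : Prop :=
  ∀ B : DetMAutomaton M X, B.Lang = A.Lang → Nat.card A.terminal ≤ Nat.card B.terminal

end DetMAutomaton

namespace DetMAutomaton

variable {M : Type} [Monoid M] {X : Type}

/-- Determinism: a path from a given state spelling a given word is unique. -/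
theorem Path.unique {A : DetMAutomaton M X} {p : A.State} {m m' : M} {w : List X}
    {s s' : A.State} (h1 : A.Path p m w s) (h2 : A.Path p m' w s') : m = m' ∧ s = s' := by
  induction h1 generalizing m' s' with
  | nil p => cases h2; exact ⟨rfl, rfl⟩
  | cons e _ ih =>
    cases h2 with
    | cons e' htail' =>
      obtain ⟨hg, hq⟩ := A.det e e'
      subst hg; subst hq
      obtain ⟨hm, hs⟩ := ih htail'
      exact ⟨by rw [hm], hs⟩

/-- Paths can be concatenated. -/
theorem Path.append' {A : DetMAutomaton M X} {p s t : A.State} {g h : M} {u v : List X}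
    (h1 : A.Path p g u s) (h2 : A.Path s h v t) : A.Path p (g * h) (u ++ v) t := by
  induction h1 generalizing h v t with
  | nil => rw [one_mul]; exact h2
  | cons e _ ih => rw [mul_assoc]; exact .cons e (ih h2)

/-- Paths can be split. -/
theorem Path.split {A : DetMAutomaton M X} :
    ∀ {u : List X} {p t : A.State} {m : M} {v : List X},
      A.Path p m (u ++ v) t → ∃ s g h, A.Path p g u s ∧ A.Path s h v t ∧ m = g * h := by
  intro u
  induction u with
  | nil => exact fun hp => ⟨_, 1, _, .nil _, hp, (one_mul _).symm⟩
  | cons x u ih =>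
    intro p t m v hp
    rw [List.cons_append] at hp
    cases hp with
    | cons e htail =>
      obtain ⟨s, g', h', h1, h2, h3⟩ := ih htail
      exact ⟨s, _ * g', h', .cons e h1, h2, by rw [h3, mul_assoc]⟩

/-- The same automaton with a new initial state and a new terminal set. -/
@[reducible] def reroot (A : DetMAutomaton M X) (i : A.State) (T : Set A.State) : DetMAutomaton M X :=
  { A with init := i, terminal := T }

/-- Paths over a bare state set and edge relation. -/
inductive PathOn {S : Type} (E : S → M × X → S → Prop) : S → M → List X → S → Prop
  | nil (p : S) : PathOn E p 1 [] p
  | cons {p q r : S} {g h : M} {x : X} {w : List X} :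
      E p (g, x) q → PathOn E q h w r → PathOn E p (g * h) (x :: w) r

theorem path_iff_pathOn (A : DetMAutomaton M X) {p q : A.State} {m : M} {w : List X} :
    A.Path p m w q ↔ PathOn A.edge p m w q := by
  constructor
  · intro h
    induction h with
    | nil p => exact .nil p
    | cons e _ ih => exact .cons e ih
  · intro h
    induction h with
    | nil p => exact .nil p
    | cons e _ ih => exact .cons e ih

theorem reroot_path {A : DetMAutomaton M X} {i : A.State} {T : Set A.State}
    {p q : A.State} {m : M} {w : List X} :
    (A.reroot i T).Path p m w q ↔ A.Path p m w q := by
  rw [path_iff_pathOn, path_iff_pathOn]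

end DetMAutomaton

/-- **Corollary 5.** Let `A` be a DTSM deterministic `M`-automaton accepting the subgroup `Q`
of the free group `F` (generated as a monoid by `X`), and let `p`, `q` be terminal states of
`A`. Then there is a word `w` representing an element of `Q` such that `(1, w)` labels a path
from `p` to `q`. -/
theorem DetMAutomaton.terminals_connected
    {M : Type} [Monoid M] {F : Type} [Group F] [IsFreeGroup F]
    {X : Type} [Fintype X] (ι : X → F)
    (hgen : ∀ f : F, ∃ w : List X, (w.map ι).prod = f)
    (Q : Subgroup F) (A : DetMAutomaton M X)
    (hacc : A.Lang = {w : List X | (w.map ι).prod ∈ Q}) (hmin : A.DTSM)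
    {p q : A.State} (hp : p ∈ A.terminal) (hq : q ∈ A.terminal) :
    ∃ w : List X, (w.map ι).prod ∈ Q ∧ A.Path p 1 w q := by
  classical
  letI : Fintype A.State := A.stateFintype
  -- Fact 1: every terminal state is reached from `init` by an accepted word.
  have fact1 : ∀ t ∈ A.terminal, ∃ u : List X, (u.map ι).prod ∈ Q ∧ A.Path A.init 1 u t := by
    intro t ht
    by_contra hcon
    push_neg at hcon
    have hlang : (A.reroot A.init (A.terminal \ {t})).Lang = A.Lang := by
      ext w
      constructor
      · rintro ⟨s, ⟨hs, -⟩, hpath⟩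
        exact ⟨s, hs, reroot_path.mp hpath⟩
      · rintro ⟨s, hs, hpath⟩
        have hwQ : (w.map ι).prod ∈ Q := by
          have hw : w ∈ A.Lang := ⟨s, hs, hpath⟩
          rwa [hacc] at hw
        have hst : s ≠ t := by
          rintro rfl
          exact hcon w hwQ hpath
        exact ⟨s, ⟨hs, hst⟩, reroot_path.mpr hpath⟩
    have hle : Nat.card ↥A.terminal ≤ Nat.card ↥(A.terminal \ {t}) :=
      hmin (A.reroot A.init (A.terminal \ {t})) hlang
    have hlt : Nat.card ↥(A.terminal \ {t}) < Nat.card ↥A.terminal := by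
      rw [Nat.card_coe_set_eq, Nat.card_coe_set_eq]
      exact Set.ncard_diff_singleton_lt_of_mem ht (Set.toFinite _)
    omega
  -- Fact 2: from any terminal state, any word with image in `Q` can be read with label 1,
  -- ending at a terminal state.
  have fact2 : ∀ t ∈ A.terminal, ∀ v : List X, (v.map ι).prod ∈ Q →
      ∃ s ∈ A.terminal, A.Path t 1 v s := by
    intro t ht v hv
    obtain ⟨u, huQ, hup⟩ := fact1 t ht
    have haccu : u ++ v ∈ A.Lang := by
      rw [hacc]
      show ((u ++ v).map ι).prod ∈ Q
      rw [List.map_append, List.prod_append]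
      exact Q.mul_mem huQ hv
    obtain ⟨s, hs, hpath⟩ := haccu
    obtain ⟨s', g, h, h1, h2, h3⟩ := Path.split hpath
    obtain ⟨hg, hs'⟩ := Path.unique hup h1
    subst hg
    subst hs'
    rw [one_mul] at h3
    rw [← h3] at h2
    exact ⟨s, hs, h2⟩
  -- The reachability sets by `(1, w)`-paths with `w` representing an element of `Q`.
  set Rs : A.State → Set A.State :=
    fun a => {b | ∃ v : List X, (v.map ι).prod ∈ Q ∧ A.Path a 1 v b} with hRs
  have hrefl : ∀ a, a ∈ Rs a := fun a => ⟨[], by simpa using Q.one_mem, .nil a⟩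
  have htrans : ∀ a b c, b ∈ Rs a → c ∈ Rs b → c ∈ Rs a := by
    rintro a b c ⟨v, hvQ, hvp⟩ ⟨v', hvQ', hvp'⟩
    refine ⟨v ++ v', ?_, ?_⟩
    · rw [List.map_append, List.prod_append]; exact Q.mul_mem hvQ hvQ'
    · have := Path.append' hvp hvp'
      rwa [one_mul] at this
  have hRsub : ∀ a ∈ A.terminal, Rs a ⊆ A.terminal := by
    rintro a ha b ⟨v, hvQ, hvp⟩
    obtain ⟨s, hs, hsp⟩ := fact2 a ha v hvQ
    obtain ⟨-, hbs⟩ := Path.unique hvp hsp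
    rwa [hbs]
  -- Choose a terminal state `t₀` with a minimal reachability set.
  obtain ⟨t₀, ht₀, hmint₀⟩ :=
    Set.exists_min_image A.terminal (fun t => (Rs t).ncard) (Set.toFinite _) ⟨p, hp⟩
  have hRseq : ∀ t ∈ Rs t₀, Rs t = Rs t₀ := by
    intro t ht
    have hsub : Rs t ⊆ Rs t₀ := fun c hc => htrans t₀ t c ht hc
    exact Set.eq_of_subset_of_ncard_le hsub (hmint₀ t (hRsub t₀ ht₀ ht)) (Set.toFinite _)
  -- Reroot the automaton at `t₀`, with terminal set `Rs t₀`; it accepts the same language.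
  obtain ⟨u₀, hu₀Q, hu₀p⟩ := fact1 t₀ ht₀
  have hlang : (A.reroot t₀ (Rs t₀)).Lang = A.Lang := by
    ext w
    constructor
    · rintro ⟨s, hsC, hpath⟩
      have hpath' : A.Path t₀ 1 w s := reroot_path.mp hpath
      have hfull : u₀ ++ w ∈ A.Lang := by
        refine ⟨s, hRsub t₀ ht₀ hsC, ?_⟩
        have := Path.append' hu₀p hpath'
        rwa [one_mul] at this
      rw [hacc] at hfull ⊢
      have hfull' : ((u₀.map ι).prod * (w.map ι).prod) ∈ Q := by
        rwa [Set.mem_setOf_eq, List.map_append, List.prod_append] at hfull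
      have : (u₀.map ι).prod⁻¹ * ((u₀.map ι).prod * (w.map ι).prod) ∈ Q :=
        Q.mul_mem (Q.inv_mem hu₀Q) hfull'
      rwa [inv_mul_cancel_left] at this
    · intro hw
      have hwQ : (w.map ι).prod ∈ Q := by rwa [hacc] at hw
      obtain ⟨s, hs, hpath⟩ := fact2 t₀ ht₀ w hwQ
      exact ⟨s, ⟨w, hwQ, hpath⟩, reroot_path.mpr hpath⟩
  -- By DTSM, `Rs t₀` is the whole terminal set.
  have hcard : Nat.card ↥A.terminal ≤ Nat.card ↥(Rs t₀) := hmin (A.reroot t₀ (Rs t₀)) hlang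
  have hterm_eq : Rs t₀ = A.terminal := by
    refine Set.eq_of_subset_of_ncard_le (hRsub t₀ ht₀) ?_ (Set.toFinite _)
    rwa [Nat.card_coe_set_eq, Nat.card_coe_set_eq] at hcard
  have hpC : p ∈ Rs t₀ := hterm_eq ▸ hp
  have hqC : q ∈ Rs t₀ := hterm_eq ▸ hq
  have : q ∈ Rs p := (hRseq p hpC).symm ▸ hqC
  exact this
end

section
/- Suppose M has unique left inverses, A is a DTSM deterministic M-automaton over X accepting the normal subgroup Q ⊆ F, and suppose (g, w) and (h, z) each label a path in A between (possibly different) pairs of terminal states. If w̄Q = z̄Q in F/Q, then g = h. -/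
namespace DetMAutomaton

variable {M : Type} [Monoid M] {X : Type}

theorem path_unique {A : DetMAutomaton M X} {w : List X} :
    ∀ {p : A.State} {m₁ m₂ : M} {q₁ q₂ : A.State},
    A.Path p m₁ w q₁ → A.Path p m₂ w q₂ → m₁ = m₂ ∧ q₁ = q₂ := by
  induction w with
  | nil =>
    intro p m₁ m₂ q₁ q₂ h1 h2
    cases h1; cases h2; exact ⟨rfl, rfl⟩
  | cons x u ih =>
    intro p m₁ m₂ q₁ q₂ h1 h2
    cases h1 with
    | cons e1 p1 =>
      cases h2 with
      | cons e2 p2 =>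
        obtain ⟨hg, hq⟩ := A.det e1 e2
        subst hg; subst hq
        obtain ⟨hm, hq'⟩ := ih p1 p2
        exact ⟨by rw [hm], hq'⟩

theorem path_append {A : DetMAutomaton M X} {u v : List X} :
    ∀ {p q r : A.State} {m₁ m₂ : M},
    A.Path p m₁ u q → A.Path q m₂ v r → A.Path p (m₁ * m₂) (u ++ v) r := by
  induction u with
  | nil =>
    intro p q r m₁ m₂ h1 h2
    cases h1
    rw [one_mul]
    exact h2
  | cons x u ih =>
    intro p q r m₁ m₂ h1 h2
    cases h1 with
    | cons e p1 =>
      rw [mul_assoc]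
      exact Path.cons e (ih p1 h2)

theorem path_split {A : DetMAutomaton M X} {u : List X} :
    ∀ {p q r : A.State} {m m₁ : M} {v : List X},
    A.Path p m (u ++ v) r → A.Path p m₁ u q → ∃ m₂, m = m₁ * m₂ ∧ A.Path q m₂ v r := by
  induction u with
  | nil =>
    intro p q r m m₁ v h1 h2
    cases h2
    exact ⟨m, (one_mul m).symm, h1⟩
  | cons x u ih =>
    intro p q r m m₁ v h1 h2
    cases h2 with
    | cons e1 p1 =>
      cases h1 with
      | cons e2 p2 =>
        obtain ⟨hg, hq⟩ := A.det e1 e2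
        subst hg; subst hq
        obtain ⟨m₂, hm, hp⟩ := ih p2 p1
        exact ⟨m₂, by rw [hm, mul_assoc], hp⟩

/-- The automaton `A` with initial state replaced by `p₀` and terminal set by `T'`. -/
def retarget (A : DetMAutomaton M X) (p₀ : A.State) (T' : Set A.State) :
    DetMAutomaton M X where
  State := A.State
  stateFintype := A.stateFintype
  init := p₀
  terminal := T'
  edge := A.edge
  det := A.det

theorem retarget_path_mp (A : DetMAutomaton M X) (p₀ : A.State) (T' : Set A.State)
    {v : List X} :
    ∀ {q r : (A.retarget p₀ T').State} {m : M},
    (A.retarget p₀ T').Path q m v r → A.Path q m v r := by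
  induction v with
  | nil =>
    intro q r m hp
    cases hp; exact Path.nil (A := A) q
  | cons x u ih =>
    intro q r m hp
    cases hp with
    | cons e p1 => exact Path.cons (A := A) e (ih p1)

theorem retarget_path_mpr (A : DetMAutomaton M X) (p₀ : A.State) (T' : Set A.State)
    {v : List X} :
    ∀ {q r : A.State} {m : M},
    A.Path q m v r → (A.retarget p₀ T').Path q m v r := by
  induction v with
  | nil =>
    intro q r m hp
    cases hp; exact Path.nil (A := A.retarget p₀ T') q
  | cons x u ih =>
    intro q r m hp
    cases hp with
    | cons e p1 => exact Path.cons (A := A.retarget p₀ T') e (ih p1)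

theorem run_exists {M : Type} [Monoid M] {X : Type} {F : Type} [Group F] {ι : X → F}
    {Q : Subgroup F} {A : DetMAutomaton M X}
    (hacc : A.Lang = {w : List X | (w.map ι).prod ∈ Q})
    {p : A.State} {e : List X} (he : (e.map ι).prod ∈ Q)
    (hp : A.Path A.init 1 e p)
    {v : List X} (hv : (v.map ι).prod ∈ Q) :
    ∃ t ∈ A.terminal, A.Path p 1 v t := by
  have hev : e ++ v ∈ A.Lang := by
    rw [hacc]
    simp only [Set.mem_setOf_eq, List.map_append, List.prod_append]
    exact mul_mem he hv
  obtain ⟨t, ht, hpath⟩ := hev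
  obtain ⟨m₂, hm, hp2⟩ := path_split hpath hp
  rw [one_mul] at hm
  rw [← hm] at hp2
  exact ⟨t, ht, hp2⟩

theorem reach_all {M : Type} [Monoid M] {X : Type} {F : Type} [Group F] {ι : X → F}
    {Q : Subgroup F} {A : DetMAutomaton M X}
    (hacc : A.Lang = {w : List X | (w.map ι).prod ∈ Q}) (hmin : A.DTSM)
    {p : A.State} {e : List X} (he : (e.map ι).prod ∈ Q)
    (hp : A.Path A.init 1 e p) :
    ∀ q ∈ A.terminal, ∃ v, (v.map ι).prod ∈ Q ∧ A.Path p 1 v q := by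
  classical
  set R : Set A.State :=
    {q | q ∈ A.terminal ∧ ∃ v, (v.map ι).prod ∈ Q ∧ A.Path p 1 v q} with hR
  have hBlang : (A.retarget p R).Lang = A.Lang := by
    ext v
    constructor
    · rintro ⟨t, htR, hpath⟩
      have hpath' : A.Path p 1 v t := retarget_path_mp A p R hpath
      have hev : e ++ v ∈ A.Lang := ⟨t, htR.1, by
        have h2 := path_append hp hpath'
        rwa [one_mul] at h2⟩
      rw [hacc] at hev ⊢
      simp only [Set.mem_setOf_eq, List.map_append, List.prod_append] at hev
      exact (mul_mem_cancel_left he).mp hev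
    · intro hv
      have hvQ : (v.map ι).prod ∈ Q := by rw [hacc] at hv; exact hv
      obtain ⟨t, ht, hpt⟩ := run_exists hacc he hp hvQ
      exact ⟨t, ⟨ht, v, hvQ, hpt⟩, retarget_path_mpr A p R hpt⟩
  have hcard : Nat.card A.terminal ≤ Nat.card R := hmin _ hBlang
  have hsub : R ⊆ A.terminal := fun q hq => hq.1
  letI : Fintype A.State := A.stateFintype
  have hTR : A.terminal = R := by
    refine (Set.eq_of_subset_of_ncard_le hsub ?_ (Set.toFinite _)).symm
    rw [← Nat.card_coe_set_eq, ← Nat.card_coe_set_eq]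
    exact hcard
  intro q hq
  have hqR : q ∈ R := hTR ▸ hq
  exact hqR.2

end DetMAutomaton

/-- **Lemma 6.** Suppose `M` has unique left inverses and `A` is a DTSM deterministic
`M`-automaton accepting the normal subgroup `Q` of the free group `F` (generated as a
monoid by `X`). If `(g, w)` and `(h, z)` each label paths between pairs of terminal states
and `w̄Q = z̄Q`, then `g = h`. -/
theorem DetMAutomaton.register_welldefined
    {M : Type} [Monoid M] (hM : UniqueLeftInverses M)
    {F : Type} [Group F] [IsFreeGroup F]
    {X : Type} [Fintype X] (ι : X → F)
    (hgen : ∀ f : F, ∃ w : List X, (w.map ι).prod = f)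
    (Q : Subgroup F) [Q.Normal] (A : DetMAutomaton M X)
    (hacc : A.Lang = {w : List X | (w.map ι).prod ∈ Q}) (hmin : A.DTSM)
    {a b c d : A.State} (ha : a ∈ A.terminal) (hb : b ∈ A.terminal)
    (hc : c ∈ A.terminal) (hd : d ∈ A.terminal)
    {g h : M} {w z : List X} (hw : A.Path a g w b) (hz : A.Path c h z d)
    (hcoset : (QuotientGroup.mk ((w.map ι).prod) : F ⧸ Q) =
      QuotientGroup.mk ((z.map ι).prod)) :
    g = h := by
  classical
  have hN : Q.Normal := inferInstance
  have hnilQ : ((([] : List X)).map ι).prod ∈ Q := by simpa using one_mem Q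
  have h0 : ∀ q ∈ A.terminal, ∃ v, (v.map ι).prod ∈ Q ∧ A.Path A.init 1 v q :=
    reach_all hacc hmin hnilQ (Path.nil A.init)
  obtain ⟨ea, heaQ, hpa⟩ := h0 a ha
  obtain ⟨eb, hebQ, hpb⟩ := h0 b hb
  obtain ⟨ed, hedQ, hpd⟩ := h0 d hd
  obtain ⟨v₁, hv₁Q, hpv₁⟩ := reach_all hacc hmin hebQ hpb a ha
  obtain ⟨v₂, hv₂Q, hpv₂⟩ := reach_all hacc hmin heaQ hpa c hc
  obtain ⟨v₃, hv₃Q, hpv₃⟩ := reach_all hacc hmin hedQ hpd a ha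
  have hW : A.Path a g (w ++ v₁) a := by
    have h1 := path_append hw hpv₁; rwa [mul_one] at h1
  have hZ : A.Path a h (v₂ ++ (z ++ v₃)) a := by
    have h1 := path_append hz hpv₃
    have h2 := path_append hpv₂ h1
    rwa [mul_one, one_mul] at h2
  obtain ⟨S, hS⟩ := hgen (((w.map ι).prod * (v₁.map ι).prod)⁻¹)
  have hWmem : (((w ++ v₁) ++ S).map ι).prod ∈ Q := by
    simp only [List.map_append, List.prod_append]
    rw [hS, mul_inv_cancel]
    exact one_mem Q
  have hZmem : (((v₂ ++ (z ++ v₃)) ++ S).map ι).prod ∈ Q := by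
    simp only [List.map_append, List.prod_append]
    rw [hS]
    have hwz : ((w.map ι).prod)⁻¹ * (z.map ι).prod ∈ Q := QuotientGroup.eq.mp hcoset
    have key : (v₂.map ι).prod * ((z.map ι).prod * (v₃.map ι).prod)
          * ((w.map ι).prod * (v₁.map ι).prod)⁻¹
        = (v₂.map ι).prod
            * ((z.map ι).prod * ((v₃.map ι).prod * ((v₁.map ι).prod)⁻¹)
                * ((z.map ι).prod)⁻¹)
            * ((z.map ι).prod * (((w.map ι).prod)⁻¹ * (z.map ι).prod)
                * ((z.map ι).prod)⁻¹) := by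
      group
    rw [key]
    exact mul_mem
      (mul_mem hv₂Q (hN.conj_mem _ (mul_mem hv₃Q (inv_mem hv₁Q)) _))
      (hN.conj_mem _ hwz _)
  obtain ⟨t, ht, hrun1⟩ := run_exists hacc heaQ hpa hWmem
  obtain ⟨k, hk, hkpath⟩ := path_split hrun1 hW
  obtain ⟨t', ht', hrun2⟩ := run_exists hacc heaQ hpa hZmem
  obtain ⟨k', hk', hk'path⟩ := path_split hrun2 hZ
  obtain ⟨hkk, -⟩ := path_unique hkpath hk'path
  exact hM k g h hk.symm (by rw [hkk]; exact hk'.symm)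
end
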